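/- Let t ≥ 0, h ≥ 0 and let i be an integer with 0 ≤ i ≤ h. For n ≥ 0 let a_n denote the number of Deutsch paths of length n from height 0 to height i all of whose heights h_k satisfy -t ≤ h_k ≤ h. Then in the formal power series ring ℤ[[v]], the series S = Σ_{n≥0} a_n · vⁿ · ((1+v+v²)⁻¹)ⁿ satisfies S · (1-v) · (1+v)^{i+2} · (1-v^{h+t+3}) = v^{i} · (1-v^{t+2}) · (1-v^{h-i+2}) · (1+v+v²). -/

import Mathlib

open PowerSeries Finset

/-- The power series `1 + v + v²` over `ℤ`. -/
noncomputable def q : PowerSeries ℤ := 1 + X + X ^ 2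

/-- `v · (1+v+v²)⁻¹` as a formal power series over `ℤ`. -/
noncomputable def w : PowerSeries ℤ := X * PowerSeries.invOfUnit q 1

/-- `p` is a Deutsch path of length `n`: each step is either an up-step `+1`
or a down-step of arbitrary (negative) size. -/
def IsDeutschPath (n : ℕ) (p : Fin (n + 1) → ℤ) : Prop :=
  ∀ i : Fin n, p i.succ - p i.castSucc = 1 ∨ p i.succ - p i.castSucc ≤ -1

/-- Number of Deutsch paths of length `n` from height `a` to height `b`
all of whose heights satisfy the predicate `P`. -/
noncomputable def pathCount (n : ℕ) (a b : ℤ) (P : ℤ → Prop) : ℕ :=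
  Nat.card {p : Fin (n + 1) → ℤ //
    p 0 = a ∧ p (Fin.last n) = b ∧ (∀ i, P (p i)) ∧ IsDeutschPath n p}

/-- The power series `Σ_{n≥0} a_n · vⁿ · ((1+v+v²)⁻¹)ⁿ`.  Since the `n`-th
summand has order `≥ n`, its coefficient of `v^N` is the (finite) sum of the
corresponding coefficients of the summands with `n ≤ N`. -/
noncomputable def series (a : ℕ → ℕ) : PowerSeries ℤ :=
  PowerSeries.mk fun N => ∑ n ∈ range (N + 1), (a n : ℤ) * coeff N (w ^ n)

/-!
Write `F j = Σₙ aₙ(j) wⁿ` with `w = v / (1 + v + v²)`, where `aₙ(j)` counts the bounded paths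
from `0` to `j`. Removing the last step gives, for `-t ≤ j ≤ h`,
`F j = [j = 0] + w (F (j - 1) + Σ_{k > j} F k)`, with `F (-t - 1) = 0`. Because `v ∣ w`, this
linear system has a unique solution, so it suffices to exhibit one: the rational functions
`gfNum t h j / gfDen t h` solve it, as the tail sums `Σ_{k ≥ j} gfNum t h k` telescope to the
closed form `gfTail t h j`. At `j = i` this is the claim, after cancelling `(1 + v) ^ (h - i)`.
-/

abbrev DeutschPaths (n : ℕ) (a b : ℤ) (P : ℤ → Prop) : Type :=
  {p : Fin (n + 1) → ℤ // p 0 = a ∧ p (Fin.last n) = b ∧ (∀ i, P (p i)) ∧ IsDeutschPath n p}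

section Paths

variable {n : ℕ} {a b : ℤ} {P : ℤ → Prop}

instance DeutschPaths.instFinite (s : Finset ℤ) : Finite (DeutschPaths n a b (· ∈ s)) :=
  Finite.of_injective (fun p i => (⟨p.1 i, p.2.2.2.1 i⟩ : s)) fun _ _ hpp' =>
    Subtype.ext <| funext fun i => congrArg Subtype.val (congrFun hpp' i)

def DeutschPaths.snocEquiv (hb : P b) :
    DeutschPaths (n + 1) a b P ≃
      Σ k : {k // P k ∧ (b - k = 1 ∨ b - k ≤ -1)}, DeutschPaths n a k P where
  toFun p :=
    ⟨⟨p.1 (Fin.last n).castSucc, p.2.2.2.1 _, by simpa [p.2.2.1] using p.2.2.2.2 (Fin.last n)⟩,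
      ⟨Fin.init p.1, p.2.1, rfl, fun i => p.2.2.2.1 _, fun i => p.2.2.2.2 i.castSucc⟩⟩
  invFun k := ⟨Fin.snoc k.2.1 b, by
    obtain ⟨⟨k, -, hstep⟩, p, hp0, hpk, hP, hD⟩ := k
    refine ⟨by simpa using hp0, by simp, Fin.lastCases (by simpa) (by simpa), ?_⟩
    refine Fin.lastCases ?_ fun i => ?_
    · simpa [hpk] using hstep
    · rw [Fin.succ_castSucc]
      simp only [Fin.snoc_castSucc]
      exact hD i⟩
  left_inv p := Subtype.ext <| by simp [← p.2.2.1]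
  right_inv k := Sigma.subtype_ext (Subtype.ext <| by simp [k.2.2.2.1]) (by simp)

theorem pathCount_zero (ha : P a) :
    pathCount 0 a b P = if b = a then 1 else 0 := by
  rw [pathCount]
  split_ifs with hb
  · rw [Nat.card_eq_one_iff_unique]
    refine ⟨⟨fun p p' => Subtype.ext <| funext fun i => ?_⟩,
      ⟨⟨fun _ => a, rfl, hb.symm, fun _ => ha, fun i => i.elim0⟩⟩⟩
    rw [Fin.fin_one_eq_zero i, p.2.1, p'.2.1]
  · have : IsEmpty (DeutschPaths 0 a b P) := ⟨fun p => hb (p.2.2.1.symm.trans p.2.1)⟩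
    exact Nat.card_of_isEmpty

theorem pathCount_succ {s : Finset ℤ} (hb : b ∈ s) :
    pathCount (n + 1) a b (· ∈ s) =
      ∑ k ∈ s with b - k = 1 ∨ b - k ≤ -1, pathCount n a k (· ∈ s) := by
  let := Fintype.subtype {k ∈ s | b - k = 1 ∨ b - k ≤ -1} fun k => Finset.mem_filter
  rw [pathCount, Nat.card_congr (DeutschPaths.snocEquiv hb), Nat.card_sigma,
    Finset.sum_subtype _ fun k => Finset.mem_filter]
  rfl

end Paths

theorem PowerSeries.eq_zero_of_forall_X_pow_dvd {R : Type*} [Semiring R] {f : R⟦X⟧}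
    (hf : ∀ n, X ^ n ∣ f) : f = 0 := by
  ext N
  simpa using X_pow_dvd_iff.mp (hf (N + 1)) N N.lt_succ_self

theorem PowerSeries.eq_zero_of_eq_X_mul_sum {R ι : Type*} [CommSemiring R] {s : Finset ι}
    {G : ι → R⟦X⟧} (c : ι → ι → R⟦X⟧) (hG : ∀ j ∈ s, G j = X * ∑ k ∈ s, c j k * G k) :
    ∀ j ∈ s, G j = 0 := by
  have hdvd : ∀ n, ∀ j ∈ s, X ^ n ∣ G j := by
    intro n
    induction n with
    | zero => simp
    | succ n ih =>
      intro j hj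
      rw [hG j hj, pow_succ']
      exact mul_dvd_mul_left X (dvd_sum fun k hk => dvd_mul_of_dvd_right (ih k hk) _)
  exact fun j hj => eq_zero_of_forall_X_pow_dvd fun n => hdvd n j hj

theorem X_dvd_w : X ∣ w := dvd_mul_right _ _

theorem q_mul_w : q * w = X := by
  rw [w, mul_left_comm, mul_invOfUnit _ _ (by simp [q]), mul_one]

theorem q_ne_zero : q ≠ 0 := fun hq => by simpa [q] using congrArg constantCoeff hq

theorem coeff_series (a : ℕ → ℕ) (N : ℕ) :
    coeff N (series a) = ∑ n ∈ range (N + 1), (a n : ℤ) * coeff N (w ^ n) :=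
  coeff_mk _ _

theorem X_pow_dvd_series_sub (a : ℕ → ℕ) (M : ℕ) :
    X ^ M ∣ series a - ∑ n ∈ range M, C (a n : ℤ) * w ^ n := by
  refine X_pow_dvd_iff.mpr fun N hN => ?_
  have hw : ∀ n, N < n → coeff N (w ^ n) = 0 := fun n hn =>
    X_pow_dvd_iff.mp (pow_dvd_pow_of_dvd X_dvd_w n) N hn
  rw [map_sub, coeff_series, map_sum, sub_eq_zero]
  simp_rw [coeff_C_mul]
  refine sum_subset (range_subset_range.mpr hN) fun n hnM hnN => ?_
  rw [hw n (by simpa using hnN), mul_zero]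

theorem series_eq_C_add_w_mul (a : ℕ → ℕ) :
    series a = C (a 0 : ℤ) + w * series (fun n => a (n + 1)) := by
  refine sub_eq_zero.mp (eq_zero_of_forall_X_pow_dvd fun M => (pow_dvd_pow X M.le_succ).trans ?_)
  have htail : X ^ (M + 1) ∣ w * (series (fun n => a (n + 1)) -
      ∑ n ∈ range M, C (a (n + 1) : ℤ) * w ^ n) := by
    rw [pow_succ']
    exact mul_dvd_mul X_dvd_w (X_pow_dvd_series_sub _ M)
  convert (X_pow_dvd_series_sub a (M + 1)).sub htail using 1
  rw [sum_range_succ', mul_sub, mul_sum]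
  simp_rw [pow_succ', mul_left_comm w]
  ring

theorem series_sum {ι : Type*} (s : Finset ι) (f : ι → ℕ → ℕ) :
    series (fun n => ∑ k ∈ s, f k n) = ∑ k ∈ s, series (f k) := by
  ext N
  simp only [coeff_series, map_sum, Nat.cast_sum, sum_mul]
  exact sum_comm

theorem series_pathCount_eq_ite_add_w_mul_sum {a b : ℤ} {s : Finset ℤ} (ha : a ∈ s)
    (hb : b ∈ s) :
    series (fun n => pathCount n a b (· ∈ s)) = (if b = a then 1 else 0) +
      w * ∑ k ∈ s with b - k = 1 ∨ b - k ≤ -1, series (fun n => pathCount n a k (· ∈ s)) := by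
  simp_rw [series_eq_C_add_w_mul (fun n => pathCount n a b (· ∈ s)), pathCount_zero ha,
    pathCount_succ hb, series_sum]
  split_ifs <;> simp

theorem Finset.sum_Icc_filter_deutschStep {M : Type*} [AddCommMonoid M] {lo hi j : ℤ}
    (f : ℤ → M) (hlo : lo ≤ j) (hhi : j ≤ hi) (hf : f (lo - 1) = 0) :
    ∑ k ∈ Icc lo hi with j - k = 1 ∨ j - k ≤ -1, f k = f (j - 1) + ∑ k ∈ Ioc j hi, f k := by
  by_cases hj : j = lo
  · subst hj
    rw [hf, zero_add]
    congr 1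
    ext k
    simp only [mem_filter, mem_Icc, mem_Ioc]
    omega
  · rw [← sum_insert (s := Ioc j hi) (a := j - 1) (by simp)]
    congr 1
    ext k
    simp only [mem_filter, mem_Icc, mem_insert, mem_Ioc]
    omega

/-- `gfNum t h j / gfDen t h` is the generating function, in `v`, of the paths from `0` to `j`
staying in `[-t, h]`. -/
noncomputable def gfDen (t h : ℕ) : ℤ⟦X⟧ := (1 - X) * (1 + X) ^ (h + 2) * (1 - X ^ (h + t + 3))

noncomputable def gfNum (t h : ℕ) : ℤ → ℤ⟦X⟧
  | Int.ofNat a => X ^ a * (1 - X ^ (t + 2)) * (1 - X ^ (h - a + 2)) * q * (1 + X) ^ (h - a)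
  | Int.negSucc s => X * (1 - X ^ (h + 1)) * (1 - X ^ (t - s)) * q * (1 + X) ^ (h + s + 1)

/-- The closed form of `Σ_{j ≤ k ≤ h} gfNum t h k`. -/
noncomputable def gfTail (t h : ℕ) : ℤ → ℤ⟦X⟧
  | Int.ofNat a => q * (1 - X ^ (t + 2)) * (X ^ a - X ^ (h + 1)) * (1 + X) ^ (h + 1 - a)
  | Int.negSucc s => q * (1 - X ^ (h + 1)) * (1 - X ^ (t + 1 - s)) * (1 + X) ^ (h + s + 2)

section ClosedForm

variable {t h : ℕ}

theorem gfNum_of_eq_natCast (j : ℤ) {a d : ℕ} (hj : j = a) (had : a + d = h) :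
    gfNum t h j = X ^ a * (1 - X ^ (t + 2)) * (1 - X ^ (d + 2)) * q * (1 + X) ^ d := by
  subst hj had
  simp [gfNum]

theorem gfNum_of_eq_neg (j : ℤ) {s e : ℕ} (hj : j = -(s + 1)) (hse : s + e = t) :
    gfNum t h j = X * (1 - X ^ (h + 1)) * (1 - X ^ e) * q * (1 + X) ^ (h + s + 1) := by
  subst hse
  rw [hj, ← Int.negSucc_eq, gfNum]
  simp

theorem gfTail_of_eq_natCast (j : ℤ) {a d : ℕ} (hj : j = a) (had : a + d = h + 1) :
    gfTail t h j = q * (1 - X ^ (t + 2)) * (X ^ a - X ^ (h + 1)) * (1 + X) ^ d := by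
  subst hj
  simp [gfTail, ← had]

theorem gfTail_of_eq_neg (j : ℤ) {s e : ℕ} (hj : j = -(s + 1)) (hse : s + e = t + 1) :
    gfTail t h j = q * (1 - X ^ (h + 1)) * (1 - X ^ e) * (1 + X) ^ (h + s + 2) := by
  rw [hj, ← Int.negSucc_eq, gfTail, ← hse]
  simp

/-- Like the path count, `gfNum` vanishes one below the floor, so its recurrence needs no
boundary case. -/
theorem gfNum_neg_succ_eq_zero : gfNum t h (-(t + 1)) = 0 := by
  rw [gfNum_of_eq_neg (s := t) (e := 0) _ rfl (add_zero t)]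
  simp

theorem gfTail_eq_gfNum_add {j : ℤ} (h1 : -(t : ℤ) ≤ j) (h2 : j ≤ h) :
    gfTail t h j = gfNum t h j + gfTail t h (j + 1) := by
  rcases le_or_gt 0 j with hj | hj
  · obtain ⟨a, d, rfl, rfl⟩ : ∃ a d : ℕ, j = a ∧ h = a + d :=
      ⟨j.toNat, h - j.toNat, by omega, by omega⟩
    rw [gfTail_of_eq_natCast _ rfl (d := d + 1) (by omega), gfNum_of_eq_natCast _ rfl rfl,
      gfTail_of_eq_natCast (a := a + 1) (d := d) _ (by push_cast; ring) (by omega)]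
    ring
  obtain ⟨s, e, rfl, rfl⟩ : ∃ s e : ℕ, j = -(s + 1) ∧ t = s + 1 + e :=
    ⟨(-j - 1).toNat, t - (-j).toNat, by omega, by omega⟩
  rw [gfTail_of_eq_neg _ rfl (e := e + 2) (by omega), gfNum_of_eq_neg _ rfl (e := e + 1) (by omega)]
  rcases s with _ | s
  · rw [gfTail_of_eq_natCast (a := 0) (d := h + 1) _ (by simp) (by omega)]
    ring
  · rw [gfTail_of_eq_neg (s := s) (e := e + 3) _ (by push_cast; ring) (by omega)]
    ring

theorem sum_Ioc_gfNum {j : ℤ} (h1 : -(t : ℤ) ≤ j) (h2 : j ≤ h) :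
    ∑ k ∈ Ioc j h, gfNum t h k = gfTail t h (j + 1) := by
  induction j, h2 using Int.leInductionDown with
  | base =>
    rw [Ioc_self, sum_empty, gfTail_of_eq_natCast (a := h + 1) (d := 0) _ (by simp) rfl]
    simp
  | pred j hj ih =>
    rw [← insert_Ioc_left_eq_Ioc_sub_one hj, sum_insert (by simp), ih (by omega), sub_add_cancel,
      gfTail_eq_gfNum_add (by omega) hj]

theorem q_mul_gfNum {j : ℤ} (h1 : -(t : ℤ) ≤ j) (h2 : j ≤ h) :
    q * gfNum t h j =
      (if j = 0 then q * gfDen t h else 0) + X * (gfNum t h (j - 1) + gfTail t h (j + 1)) := by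
  rcases lt_trichotomy j 0 with hj | rfl | hj
  · obtain ⟨s, e, rfl, rfl⟩ : ∃ s e : ℕ, j = -(s + 1) ∧ t = s + 1 + e :=
      ⟨(-j - 1).toNat, t - (-j).toNat, by omega, by omega⟩
    rw [if_neg (by omega), gfNum_of_eq_neg _ rfl (e := e + 1) (by omega),
      gfNum_of_eq_neg (s := s + 1) (e := e) _ (by push_cast; ring) (by omega)]
    rcases s with _ | s
    · rw [gfTail_of_eq_natCast (a := 0) (d := h + 1) _ (by simp) (by omega)]
      simp only [q]
      ring
    · rw [gfTail_of_eq_neg (s := s) (e := e + 3) _ (by push_cast; ring) (by omega)]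
      simp only [q]
      ring
  · rw [if_pos rfl, gfNum_of_eq_natCast (a := 0) (d := h) _ (by simp) (by omega),
      gfNum_of_eq_neg (s := 0) (e := t) _ (by simp) (by omega),
      gfTail_of_eq_natCast (a := 1) (d := h) _ (by simp) (by omega), gfDen]
    simp only [q]
    ring
  · obtain ⟨a, d, rfl, rfl⟩ : ∃ a d : ℕ, j = a + 1 ∧ h = a + 1 + d :=
      ⟨(j - 1).toNat, h - j.toNat, by omega, by omega⟩
    rw [if_neg (by omega), gfNum_of_eq_natCast (a := a + 1) (d := d) _ (by push_cast; ring) rfl,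
      gfNum_of_eq_natCast (a := a) (d := d + 1) _ (by ring) (by omega),
      gfTail_of_eq_natCast (a := a + 2) (d := d) _ (by push_cast; ring) (by omega)]
    simp only [q]
    ring

theorem gfNum_eq_ite_add_w_mul_sum {j : ℤ} (h1 : -(t : ℤ) ≤ j) (h2 : j ≤ h) :
    gfNum t h j = (if j = 0 then gfDen t h else 0) +
      w * ∑ k ∈ Icc (-(t : ℤ)) h with j - k = 1 ∨ j - k ≤ -1, gfNum t h k := by
  refine mul_left_cancel₀ q_ne_zero ?_
  rw [sum_Icc_filter_deutschStep _ h1 h2 (by rw [← neg_add', gfNum_neg_succ_eq_zero]),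
    sum_Ioc_gfNum h1 h2, q_mul_gfNum h1 h2, ← q_mul_w]
  split_ifs <;> ring

end ClosedForm

theorem series_pathCount_mul_gfDen {t h : ℕ} {j : ℤ} (h1 : -(t : ℤ) ≤ j) (h2 : j ≤ h) :
    series (fun n => pathCount n 0 j (· ∈ Icc (-(t : ℤ)) h)) * gfDen t h = gfNum t h j := by
  set s := Icc (-(t : ℤ)) h
  set F := fun k => series (fun n => pathCount n 0 k (· ∈ s))
  -- `F k * gfDen - gfNum k` solves the homogeneous version of the common recurrence.
  have h0 : (0 : ℤ) ∈ s := mem_Icc.mpr ⟨by omega, by omega⟩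
  refine sub_eq_zero.mp <| eq_zero_of_eq_X_mul_sum (G := fun k => F k * gfDen t h - gfNum t h k)
    (fun j k => if j - k = 1 ∨ j - k ≤ -1 then invOfUnit q 1 else 0) (fun k hk => ?_) j
    (mem_Icc.mpr ⟨h1, h2⟩)
  obtain ⟨hk1, hk2⟩ := mem_Icc.mp hk
  simp only [F, series_pathCount_eq_ite_add_w_mul_sum h0 hk, gfNum_eq_ite_add_w_mul_sum hk1 hk2,
    ite_mul, zero_mul, ← sum_filter, ← mul_sum, sum_sub_distrib, ← sum_mul, w]
  split_ifs <;> ring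

theorem stmt3 (t h i : ℕ) (hih : i ≤ h) :
    (series fun n => pathCount n 0 i (fun x => -(t : ℤ) ≤ x ∧ x ≤ (h : ℤ))) *
        (1 - X) * (1 + X) ^ (i + 2) * (1 - X ^ (h + t + 3)) =
      X ^ i * (1 - X ^ (t + 2)) * (1 - X ^ (h - i + 2)) * q := by
  obtain ⟨d, rfl⟩ := Nat.exists_eq_add_of_le hih
  have key := series_pathCount_mul_gfDen (t := t) (h := i + d) (j := i) (by omega) (by omega)
  simp only [mem_Icc, gfDen, gfNum_of_eq_natCast _ rfl rfl] at key
  have h1X : (1 + X : ℤ⟦X⟧) ^ d ≠ 0 := pow_ne_zero _ fun h => by simpa using congrArg (coeff 1) h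
  refine mul_right_cancel₀ h1X ?_
  rw [Nat.add_sub_cancel_left]
  linear_combination key
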